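/- arXiv:2412.17012 — 6 statements merged into one kernel-verified Lean document; each statement's English description precedes it below -/
import Mathlib

section
/- Define two sequences by value iteration: p⁰ = 0, p^{k+1} = s + Aᵀp^k + Σᵢ min{rᵢ + Bᵢᵀp^k, 0}·Eᵢ; and q⁰ = 0 ∈ ℝ^{n+m}, q^{k+1} = [A B]ᵀ [I (K^k)ᵀ] q^k + [s; r], where q^k is partitioned as (q^{x,k}, q^{u,k}) ∈ ℝⁿ×ℝ^m and K^k ∈ 𝒦(E) is a greedy gain for q^{u,k}. Then for every k ≥ 0 the vector [I (K^k)ᵀ] q^k equals p^k; i.e., value iteration in the q-parameter is algebraically equivalent to value iteration in the p-parameter. -/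
open Matrix Finset

/-- `min{v, 0}`: the minimum of 0 and of all entries of the vector `v`. -/
noncomputable def minZero {α : Type*} [Fintype α] (v : α → ℝ) : ℝ :=
  Finset.univ.fold min 0 v

/-- `‖v‖∞` for a vector: the maximum absolute entry. -/
noncomputable def vecSupNorm {α : Type*} [Fintype α] (v : α → ℝ) : ℝ :=
  Finset.univ.fold max 0 (fun a => |v a|)

/-- `‖M‖∞` for a matrix: the maximum absolute row sum. -/
noncomputable def matInfNorm {α β : Type*} [Fintype α] [Fintype β] (M : Matrix α β ℝ) : ℝ :=
  Finset.univ.fold max 0 (fun a => ∑ b, |M a b|)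

/-- `‖M‖₁` for a matrix: the maximum absolute column sum. -/
noncomputable def matOneNorm {α β : Type*} [Fintype α] [Fintype β] (M : Matrix α β ℝ) : ℝ :=
  matInfNorm Mᵀ

/-- The feasible gain set 𝒦(E): K ≥ 0 entrywise and, for each block i,
either 𝟏ᵀKᵢ = Eᵢᵀ or 𝟏ᵀKᵢ = 0. -/
def feasibleGain {n : ℕ} (m : Fin n → ℕ) (E : Matrix (Fin n) (Fin n) ℝ) :
    Set (Matrix ((i : Fin n) × Fin (m i)) (Fin n) ℝ) :=
  {K | (∀ a j, 0 ≤ K a j) ∧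
    ∀ i : Fin n, (∀ j, ∑ k : Fin (m i), K ⟨i, k⟩ j = E i j) ∨ (∀ k j, K ⟨i, k⟩ j = 0)}

/-- The extended constraint matrix Ē: for each i, mᵢ stacked copies of the row Eᵢᵀ. -/
def extE {n : ℕ} (m : Fin n → ℕ) (E : Matrix (Fin n) (Fin n) ℝ) :
    Matrix ((i : Fin n) × Fin (m i)) (Fin n) ℝ :=
  fun a j => E a.1 j

/-- `K` is a greedy gain for `v`: `K ∈ 𝒦(E)` and `Kᵢᵀ vᵢ = min{vᵢ,0}·Eᵢ` for each block i. -/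
def IsGreedy {n : ℕ} (m : Fin n → ℕ) (E : Matrix (Fin n) (Fin n) ℝ)
    (v : ((i : Fin n) × Fin (m i)) → ℝ)
    (K : Matrix ((i : Fin n) × Fin (m i)) (Fin n) ℝ) : Prop :=
  K ∈ feasibleGain m E ∧
    ∀ i j, (∑ k : Fin (m i), K ⟨i, k⟩ j * v ⟨i, k⟩)
      = minZero (fun k : Fin (m i) => v ⟨i, k⟩) * E i j

/-- The Bellman operator `p ↦ s + Aᵀp + Σᵢ min{rᵢ + Bᵢᵀp, 0}·Eᵢ`. -/
noncomputable def bellman {n : ℕ} (m : Fin n → ℕ) (A : Matrix (Fin n) (Fin n) ℝ)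
    (B : Matrix (Fin n) ((i : Fin n) × Fin (m i)) ℝ)
    (s : Fin n → ℝ) (r : ((i : Fin n) × Fin (m i)) → ℝ)
    (E : Matrix (Fin n) (Fin n) ℝ) (p : Fin n → ℝ) : Fin n → ℝ :=
  fun j => s j + Aᵀ.mulVec p j +
    ∑ i : Fin n, minZero (fun k : Fin (m i) => r ⟨i, k⟩ + Bᵀ.mulVec p ⟨i, k⟩) * E i j

namespace IsGreedy

variable {n : ℕ} {m : Fin n → ℕ} {E : Matrix (Fin n) (Fin n) ℝ}
  {v : ((i : Fin n) × Fin (m i)) → ℝ} {K : Matrix ((i : Fin n) × Fin (m i)) (Fin n) ℝ}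

theorem transpose_mulVec_eq (h : IsGreedy m E v K) :
    Kᵀ *ᵥ v = fun j => ∑ i : Fin n, minZero (fun k : Fin (m i) => v ⟨i, k⟩) * E i j := by
  ext j
  simp only [mulVec, dotProduct, transpose_apply]
  rw [← Finset.univ_sigma_univ, Finset.sum_sigma]
  exact Finset.sum_congr rfl fun i _ => h.2 i j

/-- From any `q` with `[I Kᵀ] q = p`, the q-update has state part `s + Aᵀp` and input part
`r + Bᵀp`; a greedy gain for the latter collapses `Kᵀ(r + Bᵀp)` into the minima of the Bellman
operator. -/
theorem add_transpose_mulVec_eq_bellman {A : Matrix (Fin n) (Fin n) ℝ}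
    {B : Matrix (Fin n) ((i : Fin n) × Fin (m i)) ℝ} {s : Fin n → ℝ}
    {r : ((i : Fin n) × Fin (m i)) → ℝ} {p : Fin n → ℝ}
    (h : IsGreedy m E (fun a => r a + (Bᵀ *ᵥ p) a) K) :
    (fun j => s j + (Aᵀ *ᵥ p) j) + Kᵀ *ᵥ (fun a => r a + (Bᵀ *ᵥ p) a) =
      bellman m A B s r E p := by
  rw [h.transpose_mulVec_eq]
  rfl

end IsGreedy

theorem stmt_0_general {n : ℕ} {m : Fin n → ℕ}
    (A : Matrix (Fin n) (Fin n) ℝ) (B : Matrix (Fin n) ((i : Fin n) × Fin (m i)) ℝ)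
    (s : Fin n → ℝ)
    (r : ((i : Fin n) × Fin (m i)) → ℝ)
    (E : Matrix (Fin n) (Fin n) ℝ)
    (p : ℕ → Fin n → ℝ)
    (hp0 : p 0 = 0)
    (hp : ∀ k, p (k + 1) = bellman m A B s r E (p k))
    (qx : ℕ → Fin n → ℝ) (qu : ℕ → ((i : Fin n) × Fin (m i)) → ℝ)
    (K : ℕ → Matrix ((i : Fin n) × Fin (m i)) (Fin n) ℝ)
    (hqx0 : qx 0 = 0) (hqu0 : qu 0 = 0)
    (hK : ∀ k, IsGreedy m E (qu k) (K k))
    (hqx : ∀ k, qx (k + 1) = fun j => s j + Aᵀ.mulVec (qx k + (K k)ᵀ.mulVec (qu k)) j)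
    (hqu : ∀ k, qu (k + 1) = fun a => r a + Bᵀ.mulVec (qx k + (K k)ᵀ.mulVec (qu k)) a) :
    ∀ k, qx k + (K k)ᵀ.mulVec (qu k) = p k := by
  intro k
  induction k with
  | zero =>
    rw [hqx0, hqu0, hp0, mulVec_zero, add_zero]
  | succ k ih =>
    have hgreedy := hK (k + 1)
    rw [hqu k, ih] at hgreedy
    rw [hqx k, hqu k, ih, hp k]
    exact hgreedy.add_transpose_mulVec_eq_bellman

/-- value iteration in the q-parameter is algebraically equivalent to
value iteration in the p-parameter: `[I (K^k)ᵀ] q^k = p^k` for every k. -/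
theorem stmt_0 {n : ℕ} {m : Fin n → ℕ} (hn : 0 < n) (hm : ∀ i, 0 < m i)
    (A : Matrix (Fin n) (Fin n) ℝ) (B : Matrix (Fin n) ((i : Fin n) × Fin (m i)) ℝ)
    (s : Fin n → ℝ) (hs : ∀ j, 0 ≤ s j)
    (r : ((i : Fin n) × Fin (m i)) → ℝ) (hr : ∀ a, 0 ≤ r a)
    (E : Matrix (Fin n) (Fin n) ℝ) (hE : ∀ i j, 0 ≤ E i j)
    (p : ℕ → Fin n → ℝ)
    (hp0 : p 0 = 0)
    (hp : ∀ k, p (k + 1) = bellman m A B s r E (p k))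
    (qx : ℕ → Fin n → ℝ) (qu : ℕ → ((i : Fin n) × Fin (m i)) → ℝ)
    (K : ℕ → Matrix ((i : Fin n) × Fin (m i)) (Fin n) ℝ)
    (hqx0 : qx 0 = 0) (hqu0 : qu 0 = 0)
    (hK : ∀ k, IsGreedy m E (qu k) (K k))
    (hqx : ∀ k, qx (k + 1) = fun j => s j + Aᵀ.mulVec (qx k + (K k)ᵀ.mulVec (qu k)) j)
    (hqu : ∀ k, qu (k + 1) = fun a => r a + Bᵀ.mulVec (qx k + (K k)ᵀ.mulVec (qu k)) a) :
    ∀ k, qx k + (K k)ᵀ.mulVec (qu k) = p k :=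
  stmt_0_general A B s r E p hp0 hp qx qu K hqx0 hqu0 hK hqx hqu
end

section
/- Let p ∈ ℝⁿ and p̂ ∈ ℝⁿ with p ≥ 0 and p̂ ≥ 0 satisfy, respectively, the algebraic equation p = s + Aᵀp + Σᵢ min{rᵢ + Bᵢᵀp, 0}·Eᵢ and the algebraic inequality p̂ ≥ s + Aᵀp̂ + Σᵢ min{rᵢ + Bᵢᵀp̂, 0}·Eᵢ. Then p̂ ≥ p entrywise. -/
open Matrix Finset

/-!
Take a greedy gain `K` for `p̂`, one that realises every minimum of the Bellman operator at `p̂`,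
and put `M = (A + B K)ᵀ`, a nonnegative matrix by positivity of the closed loop. Then
`p̂ ≥ s + Kᵀ r + M p̂` with `s + Kᵀ r > 0` gives `M p̂ < p̂`, while at `p` the same `K` is merely
feasible, so `p ≤ s + Kᵀ r + M p` and `w = p - p̂` satisfies `w ≤ M w`. A strict nonnegative
sub-eigenvector excludes positive entries of such a `w`: if `c > 0` is the largest ratio
`w_j / p̂_j`, attained at `j`, then `w ≤ c p̂`, so `w_j ≤ (M w)_j ≤ c (M p̂)_j < c p̂_j = w_j`.
-/

section Nonneg

variable {ι κ : Type*} [Fintype κ] {M : Matrix ι κ ℝ}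

lemma mulVec_nonneg (hM : ∀ i j, 0 ≤ M i j) {u : κ → ℝ} (hu : 0 ≤ u) : 0 ≤ M *ᵥ u :=
  fun i => dotProduct_nonneg_of_nonneg (hM i) hu

lemma mulVec_mono (hM : ∀ i j, 0 ≤ M i j) {u v : κ → ℝ} (huv : u ≤ v) : M *ᵥ u ≤ M *ᵥ v :=
  fun i => dotProduct_le_dotProduct_of_nonneg_left huv (hM i)

lemma entry_nonneg_of_mulVec_nonneg [DecidableEq κ] (hM : ∀ u : κ → ℝ, 0 ≤ u → 0 ≤ M *ᵥ u)
    (i : ι) (j : κ) : 0 ≤ M i j := by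
  simpa [mulVec_single_one] using hM (Pi.single j 1) (Pi.single_nonneg.2 zero_le_one) i

lemma nonpos_of_le_mulVec {M : Matrix κ κ ℝ} (hM : ∀ i j, 0 ≤ M i j) {u w : κ → ℝ} (hu : 0 ≤ u)
    (hMu : ∀ j, (M *ᵥ u) j < u j) (hw : w ≤ M *ᵥ w) : w ≤ 0 := by
  have hu_pos : ∀ j, 0 < u j := fun j => (mulVec_nonneg hM hu j).trans_lt (hMu j)
  intro j
  by_contra! hj
  obtain ⟨i, -, hi⟩ := Finset.univ.exists_max_image (fun l => w l / u l) ⟨j, mem_univ j⟩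
  set c := w i / u i
  have hc : 0 < c := (div_pos hj (hu_pos j)).trans_le (hi j (mem_univ j))
  have hwc : w ≤ c • u := fun l => (div_le_iff₀ (hu_pos l)).1 (hi l (mem_univ l))
  have : w i < w i := calc
    w i ≤ (M *ᵥ w) i := hw i
    _ ≤ (M *ᵥ (c • u)) i := mulVec_mono hM hwc i
    _ = c * (M *ᵥ u) i := by rw [mulVec_smul, Pi.smul_apply, smul_eq_mul]
    _ < c * u i := mul_lt_mul_of_pos_left (hMu i) hc
    _ = w i := div_mul_cancel₀ _ (hu_pos i).ne'
  exact this.false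

end Nonneg

namespace minZero

variable {α : Type*} [Fintype α] (v : α → ℝ)

lemma le_zero : minZero v ≤ 0 :=
  (Finset.fold_min_le 0).2 (Or.inl le_rfl)

lemma le_apply (a : α) : minZero v ≤ v a :=
  (Finset.fold_min_le (v a)).2 (Or.inr ⟨a, Finset.mem_univ a, le_rfl⟩)

lemma exists_apply_eq_of_neg (h : minZero v < 0) : ∃ a, v a = minZero v := by
  obtain h0 | ⟨a, -, ha⟩ := (Finset.fold_min_le (f := v) (b := 0) (minZero v)).1 le_rfl
  · exact absurd h0 h.not_ge
  · exact ⟨a, le_antisymm ha (le_apply v a)⟩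

end minZero

section Block

variable {κ ι : Type*} [Fintype κ]

lemma exists_greedy_block [DecidableEq κ] (v : κ → ℝ) (e : ι → ℝ) (he : ∀ j, 0 ≤ e j) :
    ∃ Kb : κ → ι → ℝ, (∀ k j, 0 ≤ Kb k j) ∧
      ((∀ j, ∑ k, Kb k j = e j) ∨ (∀ k j, Kb k j = 0)) ∧
      ∀ j, ∑ k, Kb k j * v k = minZero v * e j := by
  by_cases hneg : minZero v < 0
  · obtain ⟨a, ha⟩ := minZero.exists_apply_eq_of_neg v hneg
    refine ⟨fun k j => if k = a then e j else 0, fun k j => ?_, Or.inl fun j => ?_, fun j => ?_⟩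
    · exact ite_nonneg (he j) le_rfl
    · simp
    · simp [ha, mul_comm]
  · have h0 : minZero v = 0 := le_antisymm (minZero.le_zero v) (not_lt.1 hneg)
    exact ⟨0, fun _ _ => le_rfl, Or.inr fun _ _ => rfl, fun j => by simp [h0]⟩

lemma minZero_mul_le_sum {Kb : κ → ι → ℝ} {e : ι → ℝ} (he : ∀ j, 0 ≤ e j)
    (hKb : ∀ k j, 0 ≤ Kb k j) (hsum : (∀ j, ∑ k, Kb k j = e j) ∨ (∀ k j, Kb k j = 0))
    (v : κ → ℝ) (j : ι) :
    minZero v * e j ≤ ∑ k, Kb k j * v k := by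
  rcases hsum with hsum | hzero
  · calc minZero v * e j = ∑ k, Kb k j * minZero v := by rw [← Finset.sum_mul, hsum, mul_comm]
      _ ≤ ∑ k, Kb k j * v k := Finset.sum_le_sum fun k _ =>
          mul_le_mul_of_nonneg_left (minZero.le_apply v k) (hKb k j)
  · simpa [hzero] using mul_nonpos_of_nonpos_of_nonneg (minZero.le_zero v) (he j)

end Block

section Gain

variable {n : ℕ} {m : Fin n → ℕ} {E : Matrix (Fin n) (Fin n) ℝ}

lemma exists_isGreedy (hE : ∀ i j, 0 ≤ E i j) (v : ((i : Fin n) × Fin (m i)) → ℝ) :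
    ∃ K, IsGreedy m E v K := by
  choose Kb hKb_nonneg hKb_sum hKb_greedy using
    fun i => exists_greedy_block (fun k : Fin (m i) => v ⟨i, k⟩) (E i) (hE i)
  exact ⟨fun a j => Kb a.1 a.2 j, ⟨fun a j => hKb_nonneg _ _ _, hKb_sum⟩, hKb_greedy⟩

lemma sum_blocks_eq_transpose_mulVec (K : Matrix ((i : Fin n) × Fin (m i)) (Fin n) ℝ)
    (v : ((i : Fin n) × Fin (m i)) → ℝ) (j : Fin n) :
    ∑ i, ∑ k : Fin (m i), K ⟨i, k⟩ j * v ⟨i, k⟩ = (Kᵀ *ᵥ v) j := by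
  simp only [mulVec, dotProduct, transpose_apply, Fintype.sum_sigma]

end Gain

section Bellman

variable {n : ℕ} {m : Fin n → ℕ} (A : Matrix (Fin n) (Fin n) ℝ)
  (B : Matrix (Fin n) ((i : Fin n) × Fin (m i)) ℝ) (s : Fin n → ℝ)
  (r : ((i : Fin n) × Fin (m i)) → ℝ) (E : Matrix (Fin n) (Fin n) ℝ)

lemma bellman_apply (p : Fin n → ℝ) (j : Fin n) :
    bellman m A B s r E p j = s j + (Aᵀ *ᵥ p) j +
      ∑ i, minZero (fun k : Fin (m i) => (r + Bᵀ *ᵥ p) ⟨i, k⟩) * E i j := rfl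

lemma closedLoop_transpose_mulVec (K : Matrix ((i : Fin n) × Fin (m i)) (Fin n) ℝ)
    (p : Fin n → ℝ) :
    Kᵀ *ᵥ r + (A + B * K)ᵀ *ᵥ p = Aᵀ *ᵥ p + Kᵀ *ᵥ (r + Bᵀ *ᵥ p) := by
  rw [transpose_add, transpose_mul, add_mulVec, ← mulVec_mulVec, mulVec_add]
  abel

lemma bellman_eq_of_isGreedy {K : Matrix ((i : Fin n) × Fin (m i)) (Fin n) ℝ} {p : Fin n → ℝ}
    (hK : IsGreedy m E (r + Bᵀ *ᵥ p) K) :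
    bellman m A B s r E p = s + (Kᵀ *ᵥ r + (A + B * K)ᵀ *ᵥ p) := by
  funext j
  have hsum : ∑ i, minZero (fun k : Fin (m i) => (r + Bᵀ *ᵥ p) ⟨i, k⟩) * E i j
      = (Kᵀ *ᵥ (r + Bᵀ *ᵥ p)) j := by
    rw [← sum_blocks_eq_transpose_mulVec]
    exact Finset.sum_congr rfl fun i _ => (hK.2 i j).symm
  rw [bellman_apply, hsum, add_assoc, ← Pi.add_apply (Aᵀ *ᵥ p),
    ← closedLoop_transpose_mulVec, Pi.add_apply]
  rfl

lemma bellman_le_of_mem_feasibleGain (hE : ∀ i j, 0 ≤ E i j)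
    {K : Matrix ((i : Fin n) × Fin (m i)) (Fin n) ℝ} (hK : K ∈ feasibleGain m E)
    (p : Fin n → ℝ) :
    bellman m A B s r E p ≤ s + (Kᵀ *ᵥ r + (A + B * K)ᵀ *ᵥ p) := by
  intro j
  have hsum : ∑ i, minZero (fun k : Fin (m i) => (r + Bᵀ *ᵥ p) ⟨i, k⟩) * E i j
      ≤ (Kᵀ *ᵥ (r + Bᵀ *ᵥ p)) j := by
    rw [← sum_blocks_eq_transpose_mulVec]
    exact Finset.sum_le_sum fun i _ =>
      minZero_mul_le_sum (hE i) (fun k j => hK.1 ⟨i, k⟩ j) (hK.2 i) _ j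
  rw [bellman_apply, Pi.add_apply, closedLoop_transpose_mulVec, Pi.add_apply]
  linarith

end Bellman

theorem stmt_1_general {n : ℕ} {m : Fin n → ℕ}
    (A : Matrix (Fin n) (Fin n) ℝ) (B : Matrix (Fin n) ((i : Fin n) × Fin (m i)) ℝ)
    (s : Fin n → ℝ)
    (r : ((i : Fin n) × Fin (m i)) → ℝ) (hr : ∀ a, 0 ≤ r a)
    (E : Matrix (Fin n) (Fin n) ℝ) (hE : ∀ i j, 0 ≤ E i j)
    (hpos : ∀ K ∈ feasibleGain m E, ∀ x : Fin n → ℝ, (∀ j, 0 ≤ x j) →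
      ∀ j, 0 ≤ (A + B * K).mulVec x j)
    (hsr : ∀ j, (extE m E)ᵀ.mulVec r j < s j)
    (p phat : Fin n → ℝ) (hphat0 : ∀ j, 0 ≤ phat j)
    (hp : p = bellman m A B s r E p)
    (hphat : ∀ j, bellman m A B s r E phat j ≤ phat j) :
    ∀ j, p j ≤ phat j := by
  classical
  obtain ⟨K, hK⟩ := exists_isGreedy hE (r + Bᵀ *ᵥ phat)
  have hM : ∀ i j, 0 ≤ (A + B * K)ᵀ i j := fun i j =>
    entry_nonneg_of_mulVec_nonneg (hpos K hK.1) j i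
  have hKr : ∀ j, 0 ≤ (Kᵀ *ᵥ r) j := mulVec_nonneg (fun i a => hK.1.1 a i) hr
  have hs : ∀ j, 0 < s j := fun j =>
    (mulVec_nonneg (M := (extE m E)ᵀ) (fun i a => hE a.1 i) hr j).trans_lt (hsr j)
  have hphat_eq := bellman_eq_of_isGreedy A B s r E hK
  have hMphat : ∀ j, ((A + B * K)ᵀ *ᵥ phat) j < phat j := fun j => by
    have := hphat j
    rw [hphat_eq] at this
    simp only [Pi.add_apply] at this
    linarith [hs j, hKr j]
  have hw : p - phat ≤ (A + B * K)ᵀ *ᵥ (p - phat) := fun j => by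
    have h1 := bellman_le_of_mem_feasibleGain A B s r E hE hK.1 p j
    have h2 := hphat j
    rw [← hp] at h1
    rw [hphat_eq] at h2
    simp only [Pi.add_apply, Pi.sub_apply, mulVec_sub] at h1 h2 ⊢
    linarith
  exact fun j => sub_nonpos.1 (nonpos_of_le_mulVec hM hphat0 hMphat hw j)

/-- comparison lemma. If `p ≥ 0` solves the algebraic equation and
`p̂ ≥ 0` satisfies the algebraic inequality, then `p̂ ≥ p` entrywise. -/
theorem stmt_1 {n : ℕ} {m : Fin n → ℕ} (hn : 0 < n) (hm : ∀ i, 0 < m i)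
    (A : Matrix (Fin n) (Fin n) ℝ) (B : Matrix (Fin n) ((i : Fin n) × Fin (m i)) ℝ)
    (s : Fin n → ℝ) (hs : ∀ j, 0 ≤ s j)
    (r : ((i : Fin n) × Fin (m i)) → ℝ) (hr : ∀ a, 0 ≤ r a)
    (E : Matrix (Fin n) (Fin n) ℝ) (hE : ∀ i j, 0 ≤ E i j)
    (hpos : ∀ K ∈ feasibleGain m E, ∀ x : Fin n → ℝ, (∀ j, 0 ≤ x j) →
      ∀ j, 0 ≤ (A + B * K).mulVec x j)
    (hsr : ∀ j, (extE m E)ᵀ.mulVec r j < s j)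
    (p phat : Fin n → ℝ) (hp0 : ∀ j, 0 ≤ p j) (hphat0 : ∀ j, 0 ≤ phat j)
    (hp : p = bellman m A B s r E p)
    (hphat : ∀ j, bellman m A B s r E phat j ≤ phat j) :
    ∀ j, p j ≤ phat j :=
  stmt_1_general A B s r hr E hE hpos hsr p phat hphat0 hp hphat
end

section
/- Let β > 0, θ ≥ 1, γ ∈ (0,1], and t₀ ≤ T be integers. Let p ∈ ℝⁿ with p ≥ 0 solve p = s + Aᵀp + Σᵢ min{rᵢ + Bᵢᵀp, 0}·Eᵢ and satisfy p ≤ β·s. Let x(t) ∈ ℝⁿ, ε(t) ∈ ℝ^m, w(t) ∈ ℝⁿ and K(t) ∈ 𝒦(E) for t₀ ≤ t ≤ T−1 satisfy: x(t) ≥ 0 for all t, the dynamics x(t+1) = A·x(t) + B·(K(t)·x(t) + ε(t)) + w(t), and the suboptimality inequality θ·p − s ≥ Aᵀp + K(t)ᵀ(r + Bᵀp) for every t. Suppose γ satisfies γ·(s − Ēᵀr) ≤ s − Ēᵀr − (θ−1)·β·s entrywise. Then Σ_{t=t₀}^{T−1} (sᵀx(t) + rᵀK(t)x(t)) ≤ γ⁻¹·(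 pᵀx(t₀) + Σ_{t=t₀}^{T−1} β·sᵀ|B·ε(t) + w(t)| ). -/
/-!
The cost-to-go estimate `p` serves as a Lyapunov function. Dotting the dynamics with `p` and using
the suboptimality inequality gives `pᵀx(t+1) ≤ θ·pᵀx(t) − (stage cost) + pᵀ(Bε(t) + w(t))`; the
condition on `γ` absorbs the excess `(θ − 1)·pᵀx(t)` into a `(1 − γ)` fraction of the stage cost,
and `p ≤ β·s` bounds the disturbance term. Summing the resulting decrease inequality telescopes.
-/

open Matrix Finset

section Order

variable {ι κ R : Type*} [Fintype κ] [Semiring R] [PartialOrder R] [IsOrderedRing R]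

lemma mulVec_nonneg_of_nonneg {M : Matrix ι κ R} {v : κ → R} (hM : ∀ i j, 0 ≤ M i j)
    (hv : 0 ≤ v) : 0 ≤ M *ᵥ v :=
  fun i => dotProduct_nonneg_of_nonneg (hM i) hv

end Order

section Algebra

variable {ι κ R : Type*} [Fintype ι] [Fintype κ] [CommSemiring R]

lemma dotProduct_closedLoop (A : Matrix ι ι R) (B : Matrix ι κ R) (K : Matrix κ ι R)
    (p x w : ι → R) (e : κ → R) :
    p ⬝ᵥ (A *ᵥ x + B *ᵥ (K *ᵥ x + e) + w) =
      (Aᵀ *ᵥ p) ⬝ᵥ x + (Bᵀ *ᵥ p) ⬝ᵥ (K *ᵥ x) + p ⬝ᵥ (B *ᵥ e + w) := by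
  simp only [mulVec_transpose, mulVec_add, dotProduct_add, ← dotProduct_mulVec]
  ring

lemma transpose_mulVec_dotProduct (K : Matrix κ ι R) (v : κ → R) (x : ι → R) :
    (Kᵀ *ᵥ v) ⬝ᵥ x = v ⬝ᵥ (K *ᵥ x) := by
  rw [mulVec_transpose, dotProduct_mulVec]

end Algebra

lemma mul_sum_Ico_le_of_decrease {c V N : ℕ → ℝ} {γ : ℝ} {t₀ T : ℕ} (hT : t₀ ≤ T)
    (hstep : ∀ t, t₀ ≤ t → t < T → γ * c t ≤ V t - V (t + 1) + N t) (hV : 0 ≤ V T) :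
    γ * ∑ t ∈ Ico t₀ T, c t ≤ V t₀ + ∑ t ∈ Ico t₀ T, N t := by
  have htel : ∑ t ∈ Ico t₀ T, (V t - V (t + 1)) = V t₀ - V T := by
    rw [← neg_sub, ← Finset.sum_Ico_sub V hT, ← Finset.sum_neg_distrib]
    simp only [neg_sub]
  calc γ * ∑ t ∈ Ico t₀ T, c t
      ≤ ∑ t ∈ Ico t₀ T, (V t - V (t + 1) + N t) := by
        rw [Finset.mul_sum]
        exact Finset.sum_le_sum fun t ht => hstep t (mem_Ico.1 ht).1 (mem_Ico.1 ht).2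
    _ = V t₀ - V T + ∑ t ∈ Ico t₀ T, N t := by rw [Finset.sum_add_distrib, htel]
    _ ≤ V t₀ + ∑ t ∈ Ico t₀ T, N t := by linarith

section ClosedLoop

variable {ι κ : Type*} [Fintype ι] [Fintype κ]

lemma dotProduct_closedLoop_le {A : Matrix ι ι ℝ} {B : Matrix ι κ ℝ} {K : Matrix κ ι ℝ}
    {p s x w : ι → ℝ} {r e : κ → ℝ} {θ : ℝ} (hx : 0 ≤ x)
    (hsub : Aᵀ *ᵥ p + Kᵀ *ᵥ (r + Bᵀ *ᵥ p) ≤ θ • p - s) :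
    p ⬝ᵥ (A *ᵥ x + B *ᵥ (K *ᵥ x + e) + w) ≤
      θ * (p ⬝ᵥ x) - s ⬝ᵥ x - r ⬝ᵥ (K *ᵥ x) + p ⬝ᵥ (B *ᵥ e + w) := by
  have h := dotProduct_le_dotProduct_of_nonneg_right hsub hx
  rw [add_dotProduct, transpose_mulVec_dotProduct K, add_dotProduct, sub_dotProduct,
    smul_dotProduct, smul_eq_mul] at h
  rw [dotProduct_closedLoop]
  linarith

lemma dotProduct_le_mul_sum_abs {p s v : ι → ℝ} {β : ℝ} (hp : 0 ≤ p) (hps : p ≤ β • s) :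
    p ⬝ᵥ v ≤ β * ∑ j, s j * |v j| :=
  calc p ⬝ᵥ v ≤ p ⬝ᵥ |v| := dotProduct_le_dotProduct_of_nonneg_left (le_abs_self v) hp
    _ ≤ (β • s) ⬝ᵥ |v| := dotProduct_le_dotProduct_of_nonneg_right hps (abs_nonneg v)
    _ = β * ∑ j, s j * |v j| := by rw [smul_dotProduct, smul_eq_mul]; rfl

/-- Here `q` stands for `Ēᵀr`. -/
lemma mul_stageCost_le {A : Matrix ι ι ℝ} {B : Matrix ι κ ℝ} {K : Matrix κ ι ℝ}
    {p s q x w : ι → ℝ} {r e : κ → ℝ} {β θ γ : ℝ} (hθ : 1 ≤ θ) (hγ1 : γ ≤ 1)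
    (hx : 0 ≤ x) (hKx : 0 ≤ K *ᵥ x) (hr : 0 ≤ r) (hq : 0 ≤ q) (hp : 0 ≤ p) (hps : p ≤ β • s)
    (hsub : Aᵀ *ᵥ p + Kᵀ *ᵥ (r + Bᵀ *ᵥ p) ≤ θ • p - s)
    (hγ : ∀ j, γ * (s j - q j) ≤ s j - q j - (θ - 1) * (β * s j)) :
    γ * (s ⬝ᵥ x + r ⬝ᵥ (K *ᵥ x)) ≤
      p ⬝ᵥ x - p ⬝ᵥ (A *ᵥ x + B *ᵥ (K *ᵥ x + e) + w) + β * ∑ j, s j * |(B *ᵥ e + w) j| := by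
  have hexcess : (θ - 1) • p ≤ (1 - γ) • (s - q) := fun j => by
    have := mul_le_mul_of_nonneg_left (hps j) (sub_nonneg.2 hθ)
    simp only [Pi.smul_apply, Pi.sub_apply, smul_eq_mul] at this ⊢
    linarith [hγ j]
  have hgap : (θ - 1) * (p ⬝ᵥ x) ≤ (1 - γ) * (s ⬝ᵥ x - q ⬝ᵥ x) := by
    simpa only [smul_dotProduct, sub_dotProduct, smul_eq_mul] using
      dotProduct_le_dotProduct_of_nonneg_right hexcess hx
  have hqx : 0 ≤ q ⬝ᵥ x := dotProduct_nonneg_of_nonneg hq hx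
  have hrKx : 0 ≤ r ⬝ᵥ (K *ᵥ x) := dotProduct_nonneg_of_nonneg hr hKx
  have hcost := mul_le_mul_of_nonneg_left (add_nonneg hqx hrKx) (sub_nonneg.2 hγ1)
  have hstep := dotProduct_closedLoop_le (e := e) (w := w) hx hsub
  have hnoise := dotProduct_le_mul_sum_abs (v := B *ᵥ e + w) hp hps
  linarith

end ClosedLoop

theorem stmt_7_general {n : ℕ} {m : Fin n → ℕ}
    (A : Matrix (Fin n) (Fin n) ℝ) (B : Matrix (Fin n) ((i : Fin n) × Fin (m i)) ℝ)
    (s : Fin n → ℝ)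
    (r : ((i : Fin n) × Fin (m i)) → ℝ) (hr : ∀ a, 0 ≤ r a)
    (E : Matrix (Fin n) (Fin n) ℝ) (hE : ∀ i j, 0 ≤ E i j)
    (β θ γ : ℝ) (hθ : 1 ≤ θ) (hγ0 : 0 < γ) (hγ1 : γ ≤ 1)
    (t₀ T : ℕ) (ht₀T : t₀ ≤ T)
    (p : Fin n → ℝ) (hp0 : ∀ j, 0 ≤ p j)
    (hpβ : ∀ j, p j ≤ β * s j)
    (x : ℕ → Fin n → ℝ) (ε : ℕ → ((i : Fin n) × Fin (m i)) → ℝ) (w : ℕ → Fin n → ℝ)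
    (K : ℕ → Matrix ((i : Fin n) × Fin (m i)) (Fin n) ℝ)
    (hKfeas : ∀ t, t₀ ≤ t → t < T → K t ∈ feasibleGain m E)
    (hx : ∀ t, t₀ ≤ t → t ≤ T → ∀ j, 0 ≤ x t j)
    (hdyn : ∀ t, t₀ ≤ t → t < T →
      x (t + 1) = A.mulVec (x t) + B.mulVec ((K t).mulVec (x t) + ε t) + w t)
    (hsub : ∀ t, t₀ ≤ t → t < T → ∀ j,
      Aᵀ.mulVec p j + (K t)ᵀ.mulVec (r + Bᵀ.mulVec p) j ≤ θ * p j - s j)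
    (hγ : ∀ j, γ * (s j - (extE m E)ᵀ.mulVec r j) ≤
      s j - (extE m E)ᵀ.mulVec r j - (θ - 1) * (β * s j)) :
    ∑ t ∈ Finset.Ico t₀ T, (s ⬝ᵥ x t + r ⬝ᵥ (K t).mulVec (x t)) ≤
      γ⁻¹ * (p ⬝ᵥ x t₀ +
        ∑ t ∈ Finset.Ico t₀ T, β * ∑ j, s j * |B.mulVec (ε t) j + w t j|) := by
  have hq : 0 ≤ (extE m E)ᵀ *ᵥ r := mulVec_nonneg_of_nonneg (fun j a => hE a.1 j) hr
  rw [le_inv_mul_iff₀ hγ0]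
  refine mul_sum_Ico_le_of_decrease (V := fun t => p ⬝ᵥ x t) ht₀T (fun t h₀ hT => ?_)
    (dotProduct_nonneg_of_nonneg hp0 (hx T ht₀T le_rfl))
  have hxt : 0 ≤ x t := hx t h₀ hT.le
  have hKx := mulVec_nonneg_of_nonneg (hKfeas t h₀ hT).1 hxt
  rw [hdyn t h₀ hT]
  exact mul_stageCost_le hθ hγ1 hxt hKx hr hq hp0 hpβ (hsub t h₀ hT) hγ

/-- Corollary 1: accumulated-cost bound for the adaptive policy. -/
theorem stmt_7 {n : ℕ} {m : Fin n → ℕ} (hn : 0 < n) (hm : ∀ i, 0 < m i)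
    (A : Matrix (Fin n) (Fin n) ℝ) (B : Matrix (Fin n) ((i : Fin n) × Fin (m i)) ℝ)
    (s : Fin n → ℝ) (hs : ∀ j, 0 ≤ s j)
    (r : ((i : Fin n) × Fin (m i)) → ℝ) (hr : ∀ a, 0 ≤ r a)
    (E : Matrix (Fin n) (Fin n) ℝ) (hE : ∀ i j, 0 ≤ E i j)
    (β θ γ : ℝ) (hβ : 0 < β) (hθ : 1 ≤ θ) (hγ0 : 0 < γ) (hγ1 : γ ≤ 1)
    (t₀ T : ℕ) (ht₀T : t₀ ≤ T)
    (p : Fin n → ℝ) (hp0 : ∀ j, 0 ≤ p j)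
    (hpeq : p = bellman m A B s r E p)
    (hpβ : ∀ j, p j ≤ β * s j)
    (x : ℕ → Fin n → ℝ) (ε : ℕ → ((i : Fin n) × Fin (m i)) → ℝ) (w : ℕ → Fin n → ℝ)
    (K : ℕ → Matrix ((i : Fin n) × Fin (m i)) (Fin n) ℝ)
    (hKfeas : ∀ t, t₀ ≤ t → t < T → K t ∈ feasibleGain m E)
    (hx : ∀ t, t₀ ≤ t → t ≤ T → ∀ j, 0 ≤ x t j)
    (hdyn : ∀ t, t₀ ≤ t → t < T →
      x (t + 1) = A.mulVec (x t) + B.mulVec ((K t).mulVec (x t) + ε t) + w t)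
    (hsub : ∀ t, t₀ ≤ t → t < T → ∀ j,
      Aᵀ.mulVec p j + (K t)ᵀ.mulVec (r + Bᵀ.mulVec p) j ≤ θ * p j - s j)
    (hγ : ∀ j, γ * (s j - (extE m E)ᵀ.mulVec r j) ≤
      s j - (extE m E)ᵀ.mulVec r j - (θ - 1) * (β * s j)) :
    ∑ t ∈ Finset.Ico t₀ T, (s ⬝ᵥ x t + r ⬝ᵥ (K t).mulVec (x t)) ≤
      γ⁻¹ * (p ⬝ᵥ x t₀ +
        ∑ t ∈ Finset.Ico t₀ T, β * ∑ j, s j * |B.mulVec (ε t) j + w t j|) :=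
  stmt_7_general A B s r hr E hE β θ γ hθ hγ0 hγ1 t₀ T ht₀T p hp0 hpβ x ε w K hKfeas hx hdyn hsub hγ
end

section
/- Let w ∈ ℝ^m be partitioned as (w₁,…,wₙ) with wᵢ ∈ ℝ^{mᵢ}, and let x ∈ ℝⁿ with x ≥ 0. Then the infimum over K ∈ 𝒦(E) of wᵀ(Kx) is attained and equals Σᵢ min{wᵢ, 0}·(Eᵢᵀx); moreover any greedy gain K* for w attains this minimum. -/
open Matrix Finset

lemma minZero_nonpos {α : Type*} [Fintype α] (v : α → ℝ) : minZero v ≤ 0 :=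
  (Finset.fold_min_le 0).mpr (Or.inl le_rfl)

lemma minZero_le {α : Type*} [Fintype α] (v : α → ℝ) (k : α) : minZero v ≤ v k :=
  (Finset.fold_min_le (v k)).mpr (Or.inr ⟨k, Finset.mem_univ k, le_rfl⟩)

lemma minZero_attained {α : Type*} [Fintype α] [Nonempty α] (v : α → ℝ) :
    minZero v = 0 ∨ ∃ k, minZero v = v k := by
  obtain ⟨k, -, hk⟩ := Finset.exists_min_image Finset.univ v
    ⟨Classical.arbitrary α, Finset.mem_univ _⟩
  by_cases h : 0 ≤ v k
  · left
    refine le_antisymm (minZero_nonpos v) ?_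
    exact (Finset.le_fold_min 0).mpr ⟨le_rfl, fun i _ => le_trans h (hk i (Finset.mem_univ i))⟩
  · right
    refine ⟨k, le_antisymm (minZero_le v k) ?_⟩
    exact (Finset.le_fold_min _).mpr ⟨le_of_not_ge h, fun i _ => hk i (Finset.mem_univ i)⟩

lemma rearrange {n : ℕ} {m : Fin n → ℕ} (w : ((i : Fin n) × Fin (m i)) → ℝ)
    (x : Fin n → ℝ) (K : Matrix ((i : Fin n) × Fin (m i)) (Fin n) ℝ) :
    w ⬝ᵥ K.mulVec x = ∑ i : Fin n, ∑ j, (∑ k : Fin (m i), K ⟨i, k⟩ j * w ⟨i, k⟩) * x j := by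
  simp only [dotProduct, mulVec, Finset.mul_sum, Finset.sum_mul]
  rw [← Finset.univ_sigma_univ, Finset.sum_sigma]
  refine Finset.sum_congr rfl fun i _ => ?_
  rw [Finset.sum_comm]
  exact Finset.sum_congr rfl fun j _ => Finset.sum_congr rfl fun k _ => by ring

/-- the infimum of `wᵀ(Kx)` over `K ∈ 𝒦(E)` is attained and equals
`Σᵢ min{wᵢ, 0}·(Eᵢᵀx)`; moreover every greedy gain for `w` attains it. -/
theorem stmt_10 {n : ℕ} {m : Fin n → ℕ} (hn : 0 < n) (hm : ∀ i, 0 < m i)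
    (E : Matrix (Fin n) (Fin n) ℝ) (hE : ∀ i j, 0 ≤ E i j)
    (w : ((i : Fin n) × Fin (m i)) → ℝ) (x : Fin n → ℝ) (hx : ∀ j, 0 ≤ x j) :
    IsLeast {c : ℝ | ∃ K ∈ feasibleGain m E, c = w ⬝ᵥ K.mulVec x}
      (∑ i : Fin n, minZero (fun k : Fin (m i) => w ⟨i, k⟩) * ∑ j, E i j * x j) ∧
    ∀ K, IsGreedy m E w K →
      w ⬝ᵥ K.mulVec x
        = ∑ i : Fin n, minZero (fun k : Fin (m i) => w ⟨i, k⟩) * ∑ j, E i j * x j := by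
  set T : Fin n → ℝ := fun i => minZero (fun k : Fin (m i) => w ⟨i, k⟩) with hT
  -- greedy gains attain the claimed value
  have hgreedy : ∀ K, IsGreedy m E w K →
      w ⬝ᵥ K.mulVec x = ∑ i, T i * ∑ j, E i j * x j := by
    intro K ⟨_, hKw⟩
    rw [rearrange]
    refine Finset.sum_congr rfl fun i _ => ?_
    rw [Finset.mul_sum]
    exact Finset.sum_congr rfl fun j _ => by rw [hKw i j]; ring
  -- existence of a greedy gain
  have hexists : ∃ K, IsGreedy m E w K := by
    have hchoice : ∀ i : Fin n, ∃ c : Fin (m i) → ℝ, (∀ k, 0 ≤ c k) ∧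
        ((∑ k, c k = 1) ∨ (∀ k, c k = 0)) ∧ (∑ k, c k * w ⟨i, k⟩) = T i := by
      intro i
      have : Nonempty (Fin (m i)) := Fin.pos_iff_nonempty.mp (hm i)
      rcases minZero_attained (fun k : Fin (m i) => w ⟨i, k⟩) with h0 | ⟨k, hk⟩
      · exact ⟨0, fun k => le_rfl, Or.inr fun k => rfl, by simp [hT, h0]⟩
      · refine ⟨fun k' => if k' = k then 1 else 0, fun k' => by positivity,
          Or.inl (by simp), ?_⟩
        simp [ite_mul, hT, hk]
    choose c hc0 hc1 hcw using hchoice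
    refine ⟨fun a j => c a.1 a.2 * E a.1 j, ⟨⟨fun a j => mul_nonneg (hc0 a.1 a.2) (hE a.1 j),
      fun i => ?_⟩, fun i j => ?_⟩⟩
    · rcases hc1 i with h | h
      · exact Or.inl fun j => by
          show ∑ k : Fin (m i), c i k * E i j = E i j
          rw [← Finset.sum_mul, h, one_mul]
      · exact Or.inr fun k j => by
          show c i k * E i j = 0
          rw [h k, zero_mul]
    · calc ∑ k : Fin (m i), c i k * E i j * w ⟨i, k⟩
          = (∑ k : Fin (m i), c i k * w ⟨i, k⟩) * E i j := by
            rw [Finset.sum_mul]; exact Finset.sum_congr rfl fun k _ => by ring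
        _ = T i * E i j := by rw [hcw i]
  -- lower bound
  have hlb : ∀ K ∈ feasibleGain m E, (∑ i, T i * ∑ j, E i j * x j) ≤ w ⬝ᵥ K.mulVec x := by
    intro K ⟨hKpos, hKcol⟩
    rw [rearrange]
    refine Finset.sum_le_sum fun i _ => ?_
    rw [Finset.mul_sum]
    refine Finset.sum_le_sum fun j _ => ?_
    have hmain : T i * E i j ≤ ∑ k : Fin (m i), K ⟨i, k⟩ j * w ⟨i, k⟩ := by
      rcases hKcol i with h | h
      · calc T i * E i j = ∑ k : Fin (m i), K ⟨i, k⟩ j * T i := by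
              rw [← Finset.sum_mul, h j]; ring
          _ ≤ ∑ k : Fin (m i), K ⟨i, k⟩ j * w ⟨i, k⟩ :=
            Finset.sum_le_sum fun k _ =>
              mul_le_mul_of_nonneg_left (minZero_le _ k) (hKpos ⟨i, k⟩ j)
      · simp only [h, zero_mul, Finset.sum_const_zero]
        exact mul_nonpos_of_nonpos_of_nonneg (minZero_nonpos _) (hE i j)
    calc T i * (E i j * x j) = T i * E i j * x j := by ring
      _ ≤ (∑ k : Fin (m i), K ⟨i, k⟩ j * w ⟨i, k⟩) * x j :=
        mul_le_mul_of_nonneg_right hmain (hx j)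
  obtain ⟨K₀, hK₀⟩ := hexists
  exact ⟨⟨⟨K₀, hK₀.1, (hgreedy K₀ hK₀).symm⟩, fun c ⟨K, hK, hc⟩ => hc ▸ hlb K hK⟩, hgreedy⟩
end

section
/- Let Â ∈ ℝ^{n×n} and B̂ = [B̂₁ ⋯ B̂ₙ] ∈ ℝ^{n×m}. Suppose q = (qˣ, qᵘ) ∈ ℝⁿ×ℝ^m and K ∈ 𝒦(E) satisfy the fixed-point relation q = [Â B̂]ᵀ·[I Kᵀ]·q + [s; r], where K is a greedy gain for qᵘ (i.e., Kᵢᵀqᵘᵢ = min{qᵘᵢ, 0}·Eᵢ for each i). Then the vector p := [I Kᵀ]·q = qˣ + Kᵀqᵘ satisfies the model-based algebraic equation in the estimated dynamics: p = s + Âᵀp + Σᵢ min{rᵢ + B̂ᵢᵀp, 0}·Eᵢ. -/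
open Matrix Finset

theorem IsGreedy.transpose_mulVec_apply {n : ℕ} {m : Fin n → ℕ} {E : Matrix (Fin n) (Fin n) ℝ}
    {v : ((i : Fin n) × Fin (m i)) → ℝ} {K : Matrix ((i : Fin n) × Fin (m i)) (Fin n) ℝ}
    (hK : IsGreedy m E v K) (j : Fin n) :
    (Kᵀ *ᵥ v) j = ∑ i : Fin n, minZero (fun k : Fin (m i) => v ⟨i, k⟩) * E i j := by
  simp only [mulVec, dotProduct, transpose_apply]
  rw [← Finset.univ_sigma_univ, Finset.sum_sigma]
  exact Finset.sum_congr rfl fun i _ => hK.2 i j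

theorem stmt_13_general {n : ℕ} {m : Fin n → ℕ}
    (s : Fin n → ℝ)
    (r : ((i : Fin n) × Fin (m i)) → ℝ)
    (E : Matrix (Fin n) (Fin n) ℝ)
    (Ahat : Matrix (Fin n) (Fin n) ℝ) (Bhat : Matrix (Fin n) ((i : Fin n) × Fin (m i)) ℝ)
    (qx : Fin n → ℝ) (qu : ((i : Fin n) × Fin (m i)) → ℝ)
    (K : Matrix ((i : Fin n) × Fin (m i)) (Fin n) ℝ)
    (hgreedy : IsGreedy m E qu K)
    (hqx : qx = Ahatᵀ.mulVec (qx + Kᵀ.mulVec qu) + s)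
    (hqu : qu = Bhatᵀ.mulVec (qx + Kᵀ.mulVec qu) + r) :
    qx + Kᵀ.mulVec qu = bellman m Ahat Bhat s r E (qx + Kᵀ.mulVec qu) := by
  set p := qx + Kᵀ *ᵥ qu
  have hblock : ∀ i, (fun k : Fin (m i) => qu ⟨i, k⟩)
      = fun k => r ⟨i, k⟩ + (Bhatᵀ *ᵥ p) ⟨i, k⟩ := fun i => by
    funext k
    rw [hqu, Pi.add_apply, add_comm]
  funext j
  calc p j = (Ahatᵀ *ᵥ p) j + s j + (Kᵀ *ᵥ qu) j := by
        rw [← Pi.add_apply (Ahatᵀ *ᵥ p), ← hqx]; rfl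
    _ = bellman m Ahat Bhat s r E p j := by
        simp only [bellman, hgreedy.transpose_mulVec_apply, ← hblock]
        ring

/-- if `(q, K)` satisfies the fixed-point relation
`q = [Â B̂]ᵀ[I Kᵀ]q + [s;r]` with `K` a greedy gain for `qᵘ`, then `p := qˣ + Kᵀqᵘ`
satisfies the model-based algebraic equation in the estimated dynamics. -/
theorem stmt_13 {n : ℕ} {m : Fin n → ℕ} (hn : 0 < n) (hm : ∀ i, 0 < m i)
    (s : Fin n → ℝ) (hs : ∀ j, 0 ≤ s j)
    (r : ((i : Fin n) × Fin (m i)) → ℝ) (hr : ∀ a, 0 ≤ r a)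
    (E : Matrix (Fin n) (Fin n) ℝ) (hE : ∀ i j, 0 ≤ E i j)
    (Ahat : Matrix (Fin n) (Fin n) ℝ) (Bhat : Matrix (Fin n) ((i : Fin n) × Fin (m i)) ℝ)
    (qx : Fin n → ℝ) (qu : ((i : Fin n) × Fin (m i)) → ℝ)
    (K : Matrix ((i : Fin n) × Fin (m i)) (Fin n) ℝ)
    (hgreedy : IsGreedy m E qu K)
    (hqx : qx = Ahatᵀ.mulVec (qx + Kᵀ.mulVec qu) + s)
    (hqu : qu = Bhatᵀ.mulVec (qx + Kᵀ.mulVec qu) + r) :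
    qx + Kᵀ.mulVec qu = bellman m Ahat Bhat s r E (qx + Kᵀ.mulVec qu) :=
  stmt_13_general s r E Ahat Bhat qx qu K hgreedy hqx hqu
end

section
/- Let β > 0, θ ≥ 1, γ ∈ (0,1]. Let p ∈ ℝⁿ with p ≥ 0 and p ≤ β·s, let K ∈ 𝒦(E) satisfy the suboptimality inequality θ·p − s ≥ Aᵀp + Kᵀ(r + Bᵀp), and suppose γ satisfies γ·(s − Ēᵀr) ≤ s − Ēᵀr − (θ−1)·β·s entrywise. Then the Lyapunov decrease (A + BK)ᵀp ≤ p − γ·(s + Kᵀr) holds entrywise. -/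
open Matrix Finset

/-- Lyapunov decrease from the suboptimality inequality:
`(A + BK)ᵀp ≤ p − γ·(s + Kᵀr)` entrywise. -/
theorem stmt_14 {n : ℕ} {m : Fin n → ℕ} (hn : 0 < n) (hm : ∀ i, 0 < m i)
    (A : Matrix (Fin n) (Fin n) ℝ) (B : Matrix (Fin n) ((i : Fin n) × Fin (m i)) ℝ)
    (s : Fin n → ℝ) (hs : ∀ j, 0 ≤ s j)
    (r : ((i : Fin n) × Fin (m i)) → ℝ) (hr : ∀ a, 0 ≤ r a)
    (E : Matrix (Fin n) (Fin n) ℝ) (hE : ∀ i j, 0 ≤ E i j)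
    (β θ γ : ℝ) (hβ : 0 < β) (hθ : 1 ≤ θ) (hγ0 : 0 < γ) (hγ1 : γ ≤ 1)
    (p : Fin n → ℝ) (hp0 : ∀ j, 0 ≤ p j) (hpβ : ∀ j, p j ≤ β * s j)
    (K : Matrix ((i : Fin n) × Fin (m i)) (Fin n) ℝ) (hK : K ∈ feasibleGain m E)
    (hsub : ∀ j, Aᵀ.mulVec p j + Kᵀ.mulVec (r + Bᵀ.mulVec p) j ≤ θ * p j - s j)
    (hγ : ∀ j, γ * (s j - (extE m E)ᵀ.mulVec r j) ≤
      s j - (extE m E)ᵀ.mulVec r j - (θ - 1) * (β * s j)) :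
    ∀ j, (A + B * K)ᵀ.mulVec p j ≤ p j - γ * (s j + Kᵀ.mulVec r j) := by
  intro j
  have hKr : 0 ≤ Kᵀ.mulVec r j := by
    simp only [Matrix.mulVec, dotProduct, Matrix.transpose_apply]
    exact Finset.sum_nonneg fun a _ => mul_nonneg (hK.1 a j) (hr a)
  have hEr : 0 ≤ (extE m E)ᵀ.mulVec r j := by
    simp only [Matrix.mulVec, dotProduct, Matrix.transpose_apply, extE]
    exact Finset.sum_nonneg fun a _ => mul_nonneg (hE a.1 j) (hr a)
  have h1 : (A + B * K)ᵀ.mulVec p j = Aᵀ.mulVec p j + Kᵀ.mulVec (Bᵀ.mulVec p) j := by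
    rw [Matrix.transpose_add, Matrix.transpose_mul, Matrix.add_mulVec, Matrix.mulVec_mulVec]
    rfl
  have h2 : Kᵀ.mulVec (r + Bᵀ.mulVec p) j = Kᵀ.mulVec r j + Kᵀ.mulVec (Bᵀ.mulVec p) j := by
    rw [Matrix.mulVec_add]; rfl
  have hsubj := hsub j
  rw [h2] at hsubj
  rw [h1]
  have h3 : (θ - 1) * p j ≤ (θ - 1) * (β * s j) :=
    mul_le_mul_of_nonneg_left (hpβ j) (by linarith)
  have hγj := hγ j
  nlinarith [mul_nonneg (sub_nonneg.2 hγ1) hEr, mul_nonneg (sub_nonneg.2 hγ1) hKr,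
    mul_nonneg hγ0.le hKr, mul_nonneg hγ0.le hEr]
end
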